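/- Let f : S^{n-1} → (0,∞) be continuous, φ : (0,∞) → (0,∞) continuous, and set φ̃(s) = ∫₀^s 1/φ(t) dt, assumed finite for all s > 0 with lim_{s→∞} φ̃(s) = ∞. Suppose a family of positive continuous functions h(·,t) on S^{n-1} satisfies ∫_{S^{n-1}} φ̃(h(ξ,t))/f(ξ) dξ = R for all t (a fixed constant), and the maximum ħ(t) = max_ξ h(ξ,t) is attained at ξ_t with h(ξ,t) ≥ ħ(t)·(ξ_t·ξ)⁺. Then there exists a constant L, depending only on R, f, and φ̃ (not on t), such that ħ(t) ≤ L for all t. -/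

import Mathlib

/-!
Restricting the conserved integral to the cap `{ξ : ⟪ξ_t, ξ⟫ ≥ 1/2}` of the sphere, where the cone
condition gives `h(·,t) ≥ ħ(t)/2`, yields `φ̃(ħ(t)/2) · |cap| ≤ R · max f`. The cap is the graph of
`x ↦ √(1 - ‖x‖²)` over a ball of the hyperplane `ξ_tᗮ`, so its `(n-1)`-dimensional Hausdorff measure
is positive and finite, and it does not depend on `ξ_t` because reflections move caps into each
other isometrically. Since `φ̃ → ∞`, this bounds `ħ(t)` uniformly.
-/

open MeasureTheory Filter Metric Set Module
open scoped RealInnerProductSpace ENNReal NNReal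

theorem abs_sub_le_abs_sq_sub_sq {a b : ℝ} (ha : 1 / 2 ≤ a) (hb : 1 / 2 ≤ b) :
    |a - b| ≤ |a ^ 2 - b ^ 2| := by
  rw [show a ^ 2 - b ^ 2 = (a - b) * (a + b) by ring, abs_mul]
  exact le_mul_of_one_le_right (abs_nonneg _) (by rw [abs_of_pos (by linarith)]; linarith)

theorem abs_sq_sub_sq_le_two_mul {a b : ℝ} (ha : |a| ≤ 1) (hb : |b| ≤ 1) :
    |a ^ 2 - b ^ 2| ≤ 2 * |a - b| := by
  rw [show a ^ 2 - b ^ 2 = (a - b) * (a + b) by ring, abs_mul, mul_comm]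
  gcongr
  linarith [abs_add_le a b]

theorem mul_measureReal_le_setIntegral {α : Type*} [MeasurableSpace α] {μ : Measure α}
    {S C : Set α} {g : α → ℝ} {a B : ℝ} (hS : MeasurableSet S) (hμS : μ S ≠ ∞)
    (hC : MeasurableSet C) (hCS : C ⊆ S) (hg : AEMeasurable g (μ.restrict S))
    (hg0 : ∀ x ∈ S, 0 ≤ g x) (hgB : ∀ x ∈ S, g x ≤ B) (ha : ∀ x ∈ C, a ≤ g x) :
    a * μ.real C ≤ ∫ x in S, g x ∂μ := by
  have hint : IntegrableOn g S μ :=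
    ⟨hg.aestronglyMeasurable, .restrict_of_bounded (C := B) hμS.lt_top <|
      ae_restrict_of_forall_mem hS fun x hx => by
        rw [Real.norm_of_nonneg (hg0 x hx)]; exact hgB x hx⟩
  calc a * μ.real C ≤ ∫ x in C, g x ∂μ :=
        setIntegral_ge_of_const_le_real hC (measure_ne_top_of_subset hCS hμS) ha (hint.mono_set hCS)
    _ ≤ ∫ x in S, g x ∂μ :=
        setIntegral_mono_set hint (ae_restrict_of_forall_mem hS hg0) hCS.eventuallyLE

theorem integrableOn_Ioc_of_tendsto_atTop {g F : ℝ → ℝ} (hF : ∀ s > 0, F s = ∫ t in Ioc 0 s, g t)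
    (hFtop : Tendsto F atTop atTop) (s : ℝ) : IntegrableOn g (Ioc 0 s) := by
  obtain ⟨s', hFs', hss'⟩ :=
    ((hFtop.eventually_gt_atTop 0).and (eventually_ge_atTop (max s 1))).exists
  have hs' : 0 < s' := zero_lt_one.trans_le ((le_max_right _ _).trans hss')
  refine IntegrableOn.mono_set ?_ (Ioc_subset_Ioc_right ((le_max_left _ _).trans hss'))
  by_contra hint
  rw [hF s' hs', integral_undef hint] at hFs'
  exact lt_irrefl 0 hFs'

theorem monotoneOn_setIntegral_Ioc {g : ℝ → ℝ} (hg : ∀ t > 0, 0 ≤ g t)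
    (hint : ∀ s, IntegrableOn g (Ioc 0 s)) :
    MonotoneOn (fun s => ∫ t in Ioc 0 s, g t) (Ioi 0) := fun _ _ b _ hab =>
  setIntegral_mono_set (hint b) (ae_restrict_of_forall_mem measurableSet_Ioc fun t ht => hg t ht.1)
    (Ioc_subset_Ioc_right hab).eventuallyLE

theorem monotone_indicator_Ioi {ψ : ℝ → ℝ} {a : ℝ} (hψ : MonotoneOn ψ (Ioi a))
    (hψ0 : ∀ s > a, 0 ≤ ψ s) : Monotone ((Ioi a).indicator ψ) := by
  intro x y hxy
  by_cases hx : x ∈ Ioi a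
  · have hy : y ∈ Ioi a := mem_Ioi.mpr (hx.trans_le hxy)
    rw [indicator_of_mem hx, indicator_of_mem hy]
    exact hψ hx hy hxy
  · rw [indicator_of_notMem hx]
    exact indicator_nonneg hψ0 y

section SphereCap

variable {E : Type*} [NormedAddCommGroup E] [InnerProductSpace ℝ E]

def sphereCap (v : E) : Set E := sphere 0 1 ∩ {ξ | 1 / 2 ≤ ⟪v, ξ⟫}

theorem mem_sphereCap_iff {v ξ : E} : ξ ∈ sphereCap v ↔ ‖ξ‖ = 1 ∧ 1 / 2 ≤ ⟪v, ξ⟫ := by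
  simp [sphereCap]

theorem isClosed_sphereCap (v : E) : IsClosed (sphereCap v) :=
  isClosed_sphere.inter (isClosed_le continuous_const (continuous_const.inner continuous_id))

theorem LinearIsometryEquiv.image_sphereCap (e : E ≃ₗᵢ[ℝ] E) (v : E) :
    e '' sphereCap v = sphereCap (e v) := by
  ext ξ
  rw [e.image_eq_preimage_symm]
  simp [sphereCap, ← e.inner_map_map v (e.symm ξ)]

theorem hausdorffMeasure_sphereCap_congr [MeasurableSpace E] [BorelSpace E] (d : ℝ) {u v : E}
    (h : ‖u‖ = ‖v‖) : μH[d] (sphereCap u) = μH[d] (sphereCap v) := by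
  set e := Submodule.reflection (ℝ ∙ (u - v))ᗮ
  rw [← Submodule.reflection_sub h, ← e.image_sphereCap,
    e.isometry.hausdorffMeasure_image (Or.inr e.surjective)]

theorem norm_smul_add_sq {v : E} (hv : ‖v‖ = 1) (a : ℝ) (x : (ℝ ∙ v)ᗮ) :
    ‖a • v + x‖ ^ 2 = a ^ 2 + ‖x‖ ^ 2 := by
  have horth : ⟪a • v, (x : E)⟫ = 0 := by
    rw [real_inner_smul_left, Submodule.mem_orthogonal_singleton_iff_inner_right.mp x.2, mul_zero]
  rw [sq, sq, sq, norm_add_sq_eq_norm_sq_add_norm_sq_real horth, norm_smul, hv, mul_one,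
    Real.norm_eq_abs, abs_mul_abs_self]
  rfl

noncomputable def sphereGraph (v : E) (x : (ℝ ∙ v)ᗮ) : E := √(1 - ‖x‖ ^ 2) • v + x

theorem inner_sphereGraph {v : E} (hv : ‖v‖ = 1) (x : (ℝ ∙ v)ᗮ) :
    ⟪v, sphereGraph v x⟫ = √(1 - ‖x‖ ^ 2) := by
  have hx : ⟪v, (x : E)⟫ = 0 := Submodule.mem_orthogonal_singleton_iff_inner_right.mp x.2
  simp [sphereGraph, inner_add_right, real_inner_smul_right, hv, hx]

theorem norm_sphereGraph {v : E} (hv : ‖v‖ = 1) {x : (ℝ ∙ v)ᗮ} (hx : ‖x‖ ≤ 1) :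
    ‖sphereGraph v x‖ = 1 := by
  have hsq := norm_smul_add_sq hv √(1 - ‖x‖ ^ 2) x
  rw [Real.sq_sqrt (by nlinarith [norm_nonneg x]), sub_add_cancel] at hsq
  exact (pow_eq_one_iff_of_nonneg (norm_nonneg _) two_ne_zero).mp hsq

theorem orthogonalProjectionOnto_sphereGraph (v : E) (x : (ℝ ∙ v)ᗮ) :
    (ℝ ∙ v)ᗮ.orthogonalProjectionOnto (sphereGraph v x) = x := by
  simp [sphereGraph, Submodule.orthogonalProjectionOnto_orthogonalComplement_singleton_eq_zero]

theorem image_sphereGraph_closedBall {v : E} (hv : ‖v‖ = 1) :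
    sphereGraph v '' closedBall 0 √(3 / 4) = sphereCap v := by
  ext ξ
  constructor
  · rintro ⟨x, hx, rfl⟩
    have hx2 : ‖x‖ ^ 2 ≤ 3 / 4 := by
      rwa [mem_closedBall_zero_iff, Real.le_sqrt (norm_nonneg _) (by norm_num)] at hx
    refine mem_sphereCap_iff.mpr ⟨norm_sphereGraph hv (by nlinarith [norm_nonneg x]), ?_⟩
    rw [inner_sphereGraph hv, Real.le_sqrt (by norm_num) (by linarith)]
    linarith
  · intro hξ
    obtain ⟨hξ1, hξv⟩ := mem_sphereCap_iff.mp hξ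
    set x := (ℝ ∙ v)ᗮ.orthogonalProjectionOnto ξ
    have hdecomp : ⟪v, ξ⟫ • v + (x : E) = ξ := by
      rw [← Submodule.starProjection_unit_singleton ℝ hv, ← Submodule.starProjection_apply,
        Submodule.starProjection_add_starProjection_orthogonal]
    have hx2 : ‖x‖ ^ 2 = 1 - ⟪v, ξ⟫ ^ 2 := by
      have hsq := norm_smul_add_sq hv ⟪v, ξ⟫ x
      rw [hdecomp, hξ1] at hsq
      linarith
    refine ⟨x, ?_, ?_⟩
    · rw [mem_closedBall_zero_iff, Real.le_sqrt (norm_nonneg _) (by norm_num)]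
      nlinarith
    · rw [sphereGraph, hx2, sub_sub_cancel, Real.sqrt_sq (by linarith), hdecomp]

theorem lipschitzOnWith_sphereGraph {v : E} (hv : ‖v‖ = 1) :
    LipschitzOnWith 3 (sphereGraph v) (closedBall 0 √(3 / 4)) := by
  refine LipschitzOnWith.of_dist_le_mul fun x hx y hy => ?_
  have hx2 : ‖x‖ ^ 2 ≤ 3 / 4 := by
    rwa [mem_closedBall_zero_iff, Real.le_sqrt (norm_nonneg _) (by norm_num)] at hx
  have hy2 : ‖y‖ ^ 2 ≤ 3 / 4 := by
    rwa [mem_closedBall_zero_iff, Real.le_sqrt (norm_nonneg _) (by norm_num)] at hy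
  have half_le_sqrt {a : ℝ} (ha : a ^ 2 ≤ 3 / 4) : 1 / 2 ≤ √(1 - a ^ 2) := by
    rw [Real.le_sqrt (by norm_num) (by linarith)]; linarith
  have hsqrt : |√(1 - ‖x‖ ^ 2) - √(1 - ‖y‖ ^ 2)| ≤ 2 * ‖x - y‖ := by
    calc |√(1 - ‖x‖ ^ 2) - √(1 - ‖y‖ ^ 2)|
        ≤ |(√(1 - ‖x‖ ^ 2)) ^ 2 - (√(1 - ‖y‖ ^ 2)) ^ 2| :=
          abs_sub_le_abs_sq_sub_sq (half_le_sqrt hx2) (half_le_sqrt hy2)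
      _ = |‖y‖ ^ 2 - ‖x‖ ^ 2| := by
          rw [Real.sq_sqrt (by linarith), Real.sq_sqrt (by linarith)]; ring_nf
      _ ≤ 2 * |‖y‖ - ‖x‖| :=
          abs_sq_sub_sq_le_two_mul (by rw [abs_of_nonneg (norm_nonneg _)]; nlinarith)
            (by rw [abs_of_nonneg (norm_nonneg _)]; nlinarith)
      _ ≤ 2 * ‖x - y‖ := by
          rw [abs_sub_comm]; gcongr; exact abs_norm_sub_norm_le x y
  calc dist (sphereGraph v x) (sphereGraph v y)
      = ‖(√(1 - ‖x‖ ^ 2) - √(1 - ‖y‖ ^ 2)) • v + ((x - y : (ℝ ∙ v)ᗮ) : E)‖ := by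
        rw [dist_eq_norm, sphereGraph, sphereGraph, sub_smul, Submodule.coe_sub]; abel_nf
    _ ≤ |√(1 - ‖x‖ ^ 2) - √(1 - ‖y‖ ^ 2)| + ‖x - y‖ := by
        refine (norm_add_le _ _).trans_eq ?_
        rw [norm_smul, hv, mul_one, Real.norm_eq_abs]; rfl
    _ ≤ 3 * dist x y := by rw [dist_eq_norm]; linarith

theorem finrank_orthogonal_span_singleton_eq_sub_one [FiniteDimensional ℝ E] {v : E}
    (hv : v ≠ 0) : (finrank ℝ (ℝ ∙ v)ᗮ : ℝ) = finrank ℝ E - 1 := by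
  rw [← Submodule.finrank_add_finrank_orthogonal (ℝ ∙ v), finrank_span_singleton hv]
  push_cast
  ring

section Measure

variable [MeasurableSpace E] [BorelSpace E] [FiniteDimensional ℝ E]

theorem hausdorffMeasure_sphereCap_pos {v : E} (hv : ‖v‖ = 1) :
    0 < μH[(finrank ℝ E : ℝ) - 1] (sphereCap v) := by
  have hv0 : v ≠ 0 := by rintro rfl; simp at hv
  rw [← finrank_orthogonal_span_singleton_eq_sub_one hv0, ← image_sphereGraph_closedBall hv]
  set d : ℝ := ↑(finrank ℝ (ℝ ∙ v)ᗮ)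
  set D := closedBall (0 : (ℝ ∙ v)ᗮ) √(3 / 4)
  calc 0 < μH[d] D := measure_closedBall_pos _ _ (by positivity)
    _ = μH[d] ((ℝ ∙ v)ᗮ.orthogonalProjectionOnto '' (sphereGraph v '' D)) := by
        simp [image_image, orthogonalProjectionOnto_sphereGraph]
    _ ≤ μH[d] (sphereGraph v '' D) := by
        simpa using LipschitzWith.hausdorffMeasure_image_le
          (Submodule.lipschitzWith_orthogonalProjectionOnto (ℝ ∙ v)ᗮ) (Nat.cast_nonneg _) _

theorem hausdorffMeasure_sphereCap_lt_top {v : E} (hv : ‖v‖ = 1) :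
    μH[(finrank ℝ E : ℝ) - 1] (sphereCap v) < ∞ := by
  have hv0 : v ≠ 0 := by rintro rfl; simp at hv
  rw [← finrank_orthogonal_span_singleton_eq_sub_one hv0, ← image_sphereGraph_closedBall hv]
  calc μH[_] (sphereGraph v '' closedBall 0 √(3 / 4))
      ≤ (3 : ℝ≥0∞) ^ (finrank ℝ (ℝ ∙ v)ᗮ : ℝ) * μH[_] (closedBall (0 : (ℝ ∙ v)ᗮ) √(3 / 4)) := by
        simpa using (lipschitzOnWith_sphereGraph hv).hausdorffMeasure_image_le (Nat.cast_nonneg _)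
    _ < ∞ := ENNReal.mul_lt_top (by simp) measure_closedBall_lt_top

theorem hausdorffMeasure_sphere_lt_top :
    μH[(finrank ℝ E : ℝ) - 1] (sphere (0 : E) 1) < ∞ := by
  obtain ⟨t, ht, htfin, hcover⟩ := (isCompact_sphere (0 : E) 1).elim_finite_subcover_image
    (b := sphere 0 1) (c := fun v => {ξ | 1 / 2 < ⟪v, ξ⟫})
    (fun v _ => isOpen_lt continuous_const (continuous_const.inner continuous_id))
    (fun ξ hξ => mem_biUnion hξ (by simp_all; norm_num))
  refine (measure_mono fun ξ hξ => ?_).trans_lt (measure_biUnion_lt_top htfin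
    fun v hv => hausdorffMeasure_sphereCap_lt_top (mem_sphere_zero_iff_norm.mp (ht hv)))
  obtain ⟨v, hv, hξv⟩ := mem_iUnion₂.mp (hcover hξ)
  exact mem_iUnion₂.mpr ⟨v, hv, hξ, show (1 : ℝ) / 2 ≤ ⟪v, ξ⟫ from le_of_lt hξv⟩

theorem mul_measureReal_sphereCap_le_setIntegral {ψ : ℝ → ℝ} {f u : E → ℝ} {v : E} {M : ℝ}
    (hψ : MonotoneOn ψ (Ioi 0)) (hψ0 : ∀ s > 0, 0 ≤ ψ s)
    (hf : ContinuousOn f (sphere 0 1)) (hf0 : ∀ ξ ∈ sphere (0 : E) 1, 0 < f ξ)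
    (hfM : ∀ ξ ∈ sphere (0 : E) 1, f ξ ≤ M)
    (hu : ContinuousOn u (sphere 0 1)) (hu0 : ∀ ξ ∈ sphere (0 : E) 1, 0 < u ξ)
    (hv : v ∈ sphere (0 : E) 1) (hmax : ∀ ξ ∈ sphere (0 : E) 1, u ξ ≤ u v)
    (hcone : ∀ ξ ∈ sphere (0 : E) 1, u v * max ⟪v, ξ⟫ 0 ≤ u ξ) :
    ψ (u v / 2) / M * μH[(finrank ℝ E : ℝ) - 1].real (sphereCap v) ≤
      ∫ ξ in sphere 0 1, ψ (u ξ) / f ξ ∂μH[(finrank ℝ E : ℝ) - 1] := by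
  have hS : MeasurableSet (sphere (0 : E) 1) := isClosed_sphere.measurableSet
  obtain ⟨ξ₀, hξ₀, hfξ₀⟩ := (isCompact_sphere (0 : E) 1).exists_isMinOn ⟨v, hv⟩ hf
  -- `ψ` is only monotone on `(0, ∞)`; extended by `0` it is monotone, hence measurable.
  have hmeas : AEMeasurable (fun ξ => ψ (u ξ) / f ξ)
      (μH[(finrank ℝ E : ℝ) - 1].restrict (sphere 0 1)) := by
    refine (((monotone_indicator_Ioi hψ hψ0).measurable.comp_aemeasurable
      (hu.aemeasurable hS)).div (hf.aemeasurable hS)).congr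
      (ae_restrict_of_forall_mem hS fun ξ hξ => ?_)
    simp only [Pi.div_apply, Function.comp_apply, indicator_of_mem (mem_Ioi.mpr (hu0 ξ hξ))]
  refine mul_measureReal_le_setIntegral (B := ψ (u v) / f ξ₀) hS
    hausdorffMeasure_sphere_lt_top.ne (isClosed_sphereCap v).measurableSet inter_subset_left hmeas
    (fun ξ hξ => div_nonneg (hψ0 _ (hu0 ξ hξ)) (hf0 ξ hξ).le)
    (fun ξ hξ => div_le_div₀ (hψ0 _ (hu0 v hv)) (hψ (hu0 ξ hξ) (hu0 v hv) (hmax ξ hξ))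
      (hf0 ξ₀ hξ₀) (hfξ₀ hξ)) fun ξ ⟨hξ, hξv⟩ => ?_
  have hhalf : u v / 2 ≤ u ξ := by
    have := hcone ξ hξ
    have : (1 : ℝ) / 2 ≤ max ⟪v, ξ⟫ 0 := le_max_of_le_left hξv
    nlinarith [hu0 v hv]
  exact div_le_div₀ (hψ0 _ (hu0 ξ hξ)) (hψ (half_pos (hu0 v hv)) (hu0 ξ hξ) hhalf) (hf0 ξ hξ)
    (hfM ξ hξ)

end Measure

end SphereCap

theorem uniform_upper_bound_of_conserved_functional_general {n : ℕ}
    (f : EuclideanSpace ℝ (Fin n) → ℝ)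
    (hfc : ContinuousOn f (Metric.sphere (0 : EuclideanSpace ℝ (Fin n)) 1))
    (hfpos : ∀ ξ ∈ Metric.sphere (0 : EuclideanSpace ℝ (Fin n)) 1, 0 < f ξ)
    (φ : ℝ → ℝ)
    (hφpos : ∀ s > (0:ℝ), 0 < φ s)
    (φt : ℝ → ℝ) (hφt : ∀ s > (0:ℝ), φt s = ∫ t in Set.Ioc 0 s, 1 / φ t)
    (hφtop : Filter.Tendsto φt Filter.atTop Filter.atTop)
    (R : ℝ)
    (h : EuclideanSpace ℝ (Fin n) → ℝ → ℝ)
    (hpos : ∀ t ≥ (0:ℝ), ∀ ξ ∈ Metric.sphere (0 : EuclideanSpace ℝ (Fin n)) 1,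
      0 < h ξ t)
    (hcont : ∀ t ≥ (0:ℝ),
      ContinuousOn (fun ξ => h ξ t) (Metric.sphere (0 : EuclideanSpace ℝ (Fin n)) 1))
    (hcons : ∀ t ≥ (0:ℝ),
      (∫ ξ in Metric.sphere (0 : EuclideanSpace ℝ (Fin n)) 1,
        φt (h ξ t) / f ξ ∂(μH[(n : ℝ) - 1])) = R)
    (ξmax : ℝ → EuclideanSpace ℝ (Fin n))
    (hξmax : ∀ t ≥ (0:ℝ), ξmax t ∈ Metric.sphere (0 : EuclideanSpace ℝ (Fin n)) 1)
    (hmax : ∀ t ≥ (0:ℝ), ∀ ξ ∈ Metric.sphere (0 : EuclideanSpace ℝ (Fin n)) 1,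
      h ξ t ≤ h (ξmax t) t)
    (hcone : ∀ t ≥ (0:ℝ), ∀ ξ ∈ Metric.sphere (0 : EuclideanSpace ℝ (Fin n)) 1,
      h (ξmax t) t * max ⟪ξmax t, ξ⟫ 0 ≤ h ξ t) :
    ∃ L : ℝ, ∀ t ≥ (0:ℝ), h (ξmax t) t ≤ L := by
  have hd : (finrank ℝ (EuclideanSpace ℝ (Fin n)) : ℝ) - 1 = (n : ℝ) - 1 := by simp
  have hφt_nonneg : ∀ s > 0, 0 ≤ φt s := fun s hs => hφt s hs ▸
    setIntegral_nonneg measurableSet_Ioc fun t ht => (one_div_pos.mpr (hφpos t ht.1)).le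
  have hφt_mono : MonotoneOn φt (Ioi 0) :=
    (monotoneOn_setIntegral_Ioc (fun t ht => (one_div_pos.mpr (hφpos t ht)).le)
      (integrableOn_Ioc_of_tendsto_atTop hφt hφtop)).congr fun s hs => (hφt s hs).symm
  obtain ⟨M, hM⟩ := (isCompact_sphere (0 : EuclideanSpace ℝ (Fin n)) 1).bddAbove_image hfc
  have hM0 : 0 < M := (hfpos _ (hξmax 0 le_rfl)).trans_le (hM (mem_image_of_mem f (hξmax 0 le_rfl)))
  have hunit : ‖ξmax 0‖ = 1 := by simpa using hξmax 0 le_rfl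
  set c := μH[(n : ℝ) - 1].real (sphereCap (ξmax 0))
  have hc : 0 < c := ENNReal.toReal_pos (hd ▸ hausdorffMeasure_sphereCap_pos hunit).ne'
    (hd ▸ hausdorffMeasure_sphereCap_lt_top hunit).ne
  have key : ∀ t ≥ 0, φt (h (ξmax t) t / 2) * c ≤ R * M := fun t ht => by
    have hcap : c = μH[(n : ℝ) - 1].real (sphereCap (ξmax t)) := by
      simp only [c, measureReal_def, hausdorffMeasure_sphereCap_congr _ (hunit.trans
        (mem_sphere_zero_iff_norm.mp (hξmax t ht)).symm)]
    rw [← div_le_iff₀ hM0, mul_div_right_comm, hcap, ← hcons t ht, ← hd]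
    exact mul_measureReal_sphereCap_le_setIntegral hφt_mono hφt_nonneg hfc hfpos
      (fun ξ hξ => hM (mem_image_of_mem f hξ)) (hcont t ht) (hpos t ht) (hξmax t ht) (hmax t ht)
      (hcone t ht)
  obtain ⟨s₀, hs₀⟩ := (hφtop.eventually_gt_atTop (R * M / c)).exists_forall_of_atTop
  refine ⟨2 * s₀, fun t ht => not_lt.mp fun hlt => ?_⟩
  have := (div_lt_iff₀ hc).mp (hs₀ (h (ξmax t) t / 2) (by linarith))
  linarith [key t ht]

/-- Uniform upper bound for the maximum of the support function along the flow
(Lemma 4.1, upper bound): if `∫_{S^{n-1}} φ̃(h(·,t))/f dξ ≡ R` and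
`h(ξ,t) ≥ ħ(t) (ξ_t·ξ)⁺`, then `ħ(t)` is bounded uniformly in `t`. -/
theorem uniform_upper_bound_of_conserved_functional {n : ℕ} (hn : 2 ≤ n)
    (f : EuclideanSpace ℝ (Fin n) → ℝ)
    (hfc : ContinuousOn f (Metric.sphere (0 : EuclideanSpace ℝ (Fin n)) 1))
    (hfpos : ∀ ξ ∈ Metric.sphere (0 : EuclideanSpace ℝ (Fin n)) 1, 0 < f ξ)
    (φ : ℝ → ℝ) (hφc : ContinuousOn φ (Set.Ioi 0))
    (hφpos : ∀ s > (0:ℝ), 0 < φ s)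
    (φt : ℝ → ℝ) (hφt : ∀ s > (0:ℝ), φt s = ∫ t in Set.Ioc 0 s, 1 / φ t)
    (hφtop : Filter.Tendsto φt Filter.atTop Filter.atTop)
    (R : ℝ)
    (h : EuclideanSpace ℝ (Fin n) → ℝ → ℝ)
    (hpos : ∀ t ≥ (0:ℝ), ∀ ξ ∈ Metric.sphere (0 : EuclideanSpace ℝ (Fin n)) 1,
      0 < h ξ t)
    (hcont : ∀ t ≥ (0:ℝ),
      ContinuousOn (fun ξ => h ξ t) (Metric.sphere (0 : EuclideanSpace ℝ (Fin n)) 1))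
    (hcons : ∀ t ≥ (0:ℝ),
      (∫ ξ in Metric.sphere (0 : EuclideanSpace ℝ (Fin n)) 1,
        φt (h ξ t) / f ξ ∂(μH[(n : ℝ) - 1])) = R)
    (ξmax : ℝ → EuclideanSpace ℝ (Fin n))
    (hξmax : ∀ t ≥ (0:ℝ), ξmax t ∈ Metric.sphere (0 : EuclideanSpace ℝ (Fin n)) 1)
    (hmax : ∀ t ≥ (0:ℝ), ∀ ξ ∈ Metric.sphere (0 : EuclideanSpace ℝ (Fin n)) 1,
      h ξ t ≤ h (ξmax t) t)
    (hcone : ∀ t ≥ (0:ℝ), ∀ ξ ∈ Metric.sphere (0 : EuclideanSpace ℝ (Fin n)) 1,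
      h (ξmax t) t * max ⟪ξmax t, ξ⟫ 0 ≤ h ξ t) :
    ∃ L : ℝ, ∀ t ≥ (0:ℝ), h (ξmax t) t ≤ L :=
  uniform_upper_bound_of_conserved_functional_general f hfc hfpos φ hφpos φt hφt hφtop R h hpos
    hcont hcons ξmax hξmax hmax hcone
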